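/- Let y be an odd positive integer and let S be a 2-syndetic subset of ℕ such that y²·(y² + 2) ∈ S and y²·(y² − 2) ∈ S. Then there exist x, r ∈ ℕ with x ≥ 2, r ≥ 2 and x ≥ (y² − 1)/4 such that x ∈ S and x·r² ∈ S. -/
import Mathlib


/-- `A` is `l`-syndetic: it meets every block of `l` consecutive positive integers. -/
def SyndeticWith (A : Set ℕ) (l : ℕ) : Prop :=
  ∀ n : ℕ, 0 < n → ∃ m ∈ A, n ≤ m ∧ m < n + l

/-- `A` is syndetic if it is `l`-syndetic for some positive integer `l`. -/
def Syndetic (A : Set ℕ) : Prop :=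
  ∃ l : ℕ, 0 < l ∧ SyndeticWith A l

/-- if `y` is odd and a 2-syndetic `S` contains `y²(y² + 2)` and
`y²(y² − 2)`, then `S` contains `{x, x·r²}` with `x, r ≥ 2` and `x ≥ (y² − 1)/4`. -/
theorem two_syndetic_from_near_fourth_powers (y : ℕ) (hy : Odd y) (hy0 : 0 < y)
    (S : Set ℕ) (hS : SyndeticWith S 2)
    (h1 : y ^ 2 * (y ^ 2 + 2) ∈ S) (h2 : y ^ 2 * (y ^ 2 - 2) ∈ S) :
    ∃ x r : ℕ, 2 ≤ x ∧ 2 ≤ r ∧ y ^ 2 - 1 ≤ 4 * x ∧ x ∈ S ∧ x * r ^ 2 ∈ S := by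
  obtain ⟨k, hk⟩ := hy
  rcases Nat.eq_zero_or_pos k with hk0 | hk0
  · -- y = 1 case
    subst hk0
    have hy1 : y = 1 := by omega
    subst hy1
    have h3 : (3 : ℕ) ∈ S := by norm_num at h1; exact h1
    obtain ⟨m, hmS, hm1, hm2⟩ := hS 48 (by norm_num)
    have hm : m = 48 ∨ m = 49 := by omega
    rcases hm with hm | hm
    · subst hm
      exact ⟨3, 4, by norm_num, by norm_num, by norm_num, h3, by norm_num; exact hmS⟩
    · subst hm
      obtain ⟨m2, hm2S, hn1, hn2⟩ := hS 1825200 (by norm_num)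
      have hm' : m2 = 1825200 ∨ m2 = 1825201 := by omega
      rcases hm' with hm' | hm'
      · subst hm'
        exact ⟨3, 780, by norm_num, by norm_num, by norm_num, h3, by norm_num; exact hm2S⟩
      · subst hm'
        exact ⟨49, 193, by norm_num, by norm_num, by norm_num, hmS, by norm_num; exact hm2S⟩
  · -- y = 2k+1 with k ≥ 1, so y ≥ 3
    set j : ℕ := k * k + k with hj
    have hjy : 4 * j + 1 = y ^ 2 := by subst hk; ring
    have hj2 : 2 ≤ j := by nlinarith
    have hy3 : 9 ≤ y ^ 2 := by nlinarith
    obtain ⟨m, hmS, hm1, hm2⟩ := hS j (by omega)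
    have hm : m = j ∨ m = j + 1 := by omega
    rcases hm with hm | hm
    · subst hm
      obtain ⟨m', hm'S, hn1, hn2⟩ := hS (4 * j - 1) (by omega)
      have hm' : m' = 4 * j - 1 ∨ m' = 4 * j := by omega
      rcases hm' with hm' | hm'
      · -- y² - 2 ∈ S, take r = y
        refine ⟨y ^ 2 - 2, y, by omega, by nlinarith, by omega, ?_, ?_⟩
        · have : m' = y ^ 2 - 2 := by omega
          rwa [this] at hm'S
        · have : (y ^ 2 - 2) * y ^ 2 = y ^ 2 * (y ^ 2 - 2) := by ring
          rwa [this]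
      · refine ⟨j, 2, by omega, le_refl 2, by omega, hmS, ?_⟩
        have : j * 2 ^ 2 = m' := by omega
        rwa [this]
    · obtain ⟨m', hm'S, hn1, hn2⟩ := hS (4 * j + 3) (by omega)
      have hm' : m' = 4 * j + 3 ∨ m' = 4 * j + 4 := by omega
      rcases hm' with hm' | hm'
      · -- y² + 2 ∈ S, take r = y
        refine ⟨y ^ 2 + 2, y, by omega, by nlinarith, by omega, ?_, ?_⟩
        · have : m' = y ^ 2 + 2 := by omega
          rwa [this] at hm'S
        · have : (y ^ 2 + 2) * y ^ 2 = y ^ 2 * (y ^ 2 + 2) := by ring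
          rwa [this]
      · subst hm
        refine ⟨j + 1, 2, by omega, le_refl 2, by omega, hmS, ?_⟩
        have : (j + 1) * 2 ^ 2 = m' := by omega
        rwa [this]
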